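/- The Kummer lattice Π is an even negative-definite lattice of rank 16 with discriminant group of order 2^6. -/

import Mathlib

open Submodule

/-- The index set `𝔽₂⁴` of the 16 two-torsion points / exceptional divisors. -/
abbrev F16 := Fin 4 → ZMod 2

/-- The ambient 16-dimensional rational quadratic space containing the Kummer lattice. -/
abbrev VK := F16 → ℚ

/-- The (negative definite) bilinear form on `VK`, with Gram matrix `diag(-2,…,-2)` on
the standard basis. -/
def BK : VK →ₗ[ℚ] VK →ₗ[ℚ] ℚ :=
  LinearMap.mk₂ ℚ (fun u v => -2 * ∑ a, u a * v a)
    (fun u u' v => by simp [add_mul, Finset.sum_add_distrib]; try ring)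
    (fun c u v => by
      simp only [Pi.smul_apply, smul_eq_mul, Finset.mul_sum, neg_mul]
      exact Finset.sum_congr rfl fun x _ => by ring)
    (fun u v v' => by simp [mul_add, Finset.sum_add_distrib]; try ring)
    (fun c u v => by
      simp only [Pi.smul_apply, smul_eq_mul, Finset.mul_sum, neg_mul]
      exact Finset.sum_congr rfl fun x _ => by ring)

/-- The classes `E_a`, `a ∈ 𝔽₂⁴`, of the exceptional divisors: the standard basis
vectors, of norm `-2`. -/
def EK (a : F16) : VK := fun b => if b = a then 1 else 0

/-- A subset of `𝔽₂⁴` is an affine hyperplane if it is the solution set of a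
non-trivial affine-linear equation. -/
def IsAffineHyperplane (H : Finset F16) : Prop :=
  ∃ (φ : F16 →ₗ[ZMod 2] ZMod 2) (c : ZMod 2), φ ≠ 0 ∧ ∀ a, a ∈ H ↔ φ a = c

/-- The half sum `(1/2) Σ_{a ∈ H} E_a` of the exceptional classes over a subset
`H ⊆ 𝔽₂⁴`. -/
def halfSum (H : Finset F16) : VK := (2 : ℚ)⁻¹ • ∑ a ∈ H, EK a

/-- The Kummer lattice `Π`, spanned by the `E_a` together with the half sums over all
affine hyperplanes of `𝔽₂⁴`. -/
def KummerLat : Submodule ℤ VK :=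
  span ℤ (Set.range EK ∪ { v | ∃ H : Finset F16, IsAffineHyperplane H ∧ v = halfSum H })

/-- The dual lattice `L* = {v ∈ span_ℚ L : B(v, L) ⊆ ℤ}` of a lattice `L` inside a
rational quadratic space. -/
def dualLat {V : Type*} [AddCommGroup V] [Module ℚ V]
    (B : V →ₗ[ℚ] V →ₗ[ℚ] ℚ) (L : Submodule ℤ V) : Submodule ℤ V where
  carrier := { v | v ∈ span ℚ (L : Set V) ∧ ∀ w ∈ L, ∃ k : ℤ, B v w = k }
  add_mem' := by
    rintro a b ⟨haS, ha⟩ ⟨hbS, hb⟩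
    refine ⟨add_mem haS hbS, fun w hw => ?_⟩
    obtain ⟨k, hk⟩ := ha w hw
    obtain ⟨l, hl⟩ := hb w hw
    exact ⟨k + l, by simp [hk, hl]⟩
  zero_mem' := ⟨zero_mem _, fun w _ => ⟨0, by simp⟩⟩
  smul_mem' := by
    rintro c v ⟨hvS, hv⟩
    refine ⟨zsmul_mem hvS c, fun w hw => ?_⟩
    obtain ⟨k, hk⟩ := hv w hw
    refine ⟨c * k, ?_⟩
    have : B (c • v) = c • B v := map_zsmul B c v
    rw [this]
    simp [hk, mul_comm]

/-- The discriminant group `L*/L` of a lattice `L`. -/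
abbrev Disc {V : Type*} [AddCommGroup V] [Module ℚ V]
    (B : V →ₗ[ℚ] V →ₗ[ℚ] ℚ) (L : Submodule ℤ V) :=
  dualLat B L ⧸ (Submodule.comap (dualLat B L).subtype L)

/-!
The Kummer lattice is Construction A of the first order Reed–Muller code `C = RM(1,4) ⊂ 𝔽₂¹⁶`,
`Π = {u/2 | u ∈ ℤ¹⁶, u mod 2 ∈ C}`: the indicator of an affine hyperplane is an affine function
on `𝔽₂⁴`, and these indicators span `C`. For the form `-2 Σ xᵢyᵢ` the dual of Construction A of a
code is Construction A of the dual code, so `Π*/Π ≅ C^⊥/C` has order `2^(16 - 5 - 5)`. Since `C`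
is self-orthogonal, `Π` is integral, hence even, being generated by the `E_a` of norm `-2` and the
half sums over 8-point hyperplanes of norm `-4`. It has rank 16 as `ℤ¹⁶ ⊆ Π ⊆ ½ℤ¹⁶`.
-/

open Module Matrix

section IntegralLattice

variable {V : Type*} [AddCommGroup V] [Module ℚ V]

lemma card_disc_eq_relIndex (B : V →ₗ[ℚ] V →ₗ[ℚ] ℚ) (L : Submodule ℤ V) :
    Nat.card (Disc B L) = L.toAddSubgroup.relIndex (dualLat B L).toAddSubgroup := rfl

lemma exists_eq_two_mul_of_mem_span {B : V →ₗ[ℚ] V →ₗ[ℚ] ℚ} (hB : ∀ v w, B v w = B w v)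
    {S : Set V} (hint : span ℤ S ≤ dualLat B (span ℤ S)) (hS : ∀ s ∈ S, ∃ k : ℤ, B s s = 2 * k)
    {v : V} (hv : v ∈ span ℤ S) : ∃ k : ℤ, B v v = 2 * k := by
  induction hv using Submodule.span_induction with
  | mem s hs => exact hS s hs
  | zero => exact ⟨0, by simp⟩
  | add x y hx hy ihx ihy =>
    obtain ⟨m, hm⟩ := ihx
    obtain ⟨n, hn⟩ := ihy
    obtain ⟨k, hk⟩ := (hint hx).2 y hy
    refine ⟨m + n + k, ?_⟩
    simp only [map_add, LinearMap.add_apply, hm, hn, hB y x, hk]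
    push_cast
    ring
  | smul z x _ ih =>
    obtain ⟨m, hm⟩ := ih
    refine ⟨z * z * m, ?_⟩
    simp only [map_zsmul, LinearMap.smul_apply, hm, zsmul_eq_mul]
    push_cast
    ring

end IntegralLattice

namespace ConstructionA

variable {ι : Type*}

def modTwo : (ι → ℤ) →ₗ[ℤ] (ι → ZMod 2) :=
  LinearMap.compLeft (Int.castAddHom (ZMod 2)).toIntLinearMap ι

def halve : (ι → ℤ) →ₗ[ℤ] (ι → ℚ) where
  toFun u := (2 : ℚ)⁻¹ • fun a => (u a : ℚ)
  map_add' u v := by ext; simp [mul_add]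
  map_smul' z u := by ext; simp; ring

@[simp] lemma modTwo_apply (u : ι → ℤ) (a : ι) : modTwo u a = (u a : ZMod 2) := rfl

@[simp] lemma halve_apply (u : ι → ℤ) (a : ι) : halve u a = (u a : ℚ) / 2 := by
  simp [halve, div_eq_inv_mul]

lemma modTwo_surjective : Function.Surjective (modTwo (ι := ι)) :=
  fun c => ⟨fun a => (c a).val, funext fun a => by simp⟩

lemma halve_injective : Function.Injective (halve (ι := ι)) := fun u v h =>
  funext fun a => by simpa using congrFun h a

/-- Construction A, scaled by `1/2` rather than `1/√2` so that it lives in `ι → ℚ`. -/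
def constructionA (C : Submodule (ZMod 2) (ι → ZMod 2)) : Submodule ℤ (ι → ℚ) :=
  ((C.restrictScalars ℤ).comap modTwo).map halve

lemma constructionA_mono {C D : Submodule (ZMod 2) (ι → ZMod 2)} (h : C ≤ D) :
    constructionA C ≤ constructionA D :=
  Submodule.map_mono (Submodule.comap_mono h)

variable [Fintype ι]

lemma two_dvd_dotProduct_iff {u w : ι → ℤ} : (2 : ℤ) ∣ u ⬝ᵥ w ↔ modTwo u ⬝ᵥ modTwo w = 0 := by
  have h := ZMod.intCast_zmod_eq_zero_iff_dvd (u ⬝ᵥ w) 2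
  rw [Nat.cast_ofNat] at h
  rw [← h, ← eq_intCast (Int.castRingHom (ZMod 2)), RingHom.map_dotProduct]
  rfl

def dualCode (C : Submodule (ZMod 2) (ι → ZMod 2)) : Submodule (ZMod 2) (ι → ZMod 2) :=
  LinearMap.BilinForm.orthogonal (dotProductBilin (ZMod 2) (ZMod 2)) C

lemma mem_dualCode {C : Submodule (ZMod 2) (ι → ZMod 2)} {w : ι → ZMod 2} :
    w ∈ dualCode C ↔ ∀ c ∈ C, c ⬝ᵥ w = 0 := Iff.rfl

lemma dotProductBilin_nondegenerate {K : Type*} [Field K] :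
    (dotProductBilin K K : LinearMap.BilinForm K (ι → K)).Nondegenerate := by
  classical
  refine ⟨fun x hx => funext fun a => ?_, fun y hy => funext fun a => ?_⟩
  · simpa using hx (Pi.single a 1)
  · simpa using hy (Pi.single a 1)

lemma finrank_dualCode (C : Submodule (ZMod 2) (ι → ZMod 2)) :
    finrank (ZMod 2) (dualCode C) = Fintype.card ι - finrank (ZMod 2) C := by
  rw [dualCode, LinearMap.BilinForm.finrank_orthogonal dotProductBilin_nondegenerate,
    Module.finrank_fintype_fun_eq_card]

lemma span_le_dualCode_span {S : Set (ι → ZMod 2)} (h : ∀ s ∈ S, ∀ t ∈ S, s ⬝ᵥ t = 0) :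
    span (ZMod 2) S ≤ dualCode (span (ZMod 2) S) := by
  rw [span_le]
  intro t ht c hc
  have hker : span (ZMod 2) S ≤ LinearMap.ker ((dotProductBilin (ZMod 2) (ZMod 2)).flip t) :=
    span_le.2 fun s hs => by simpa using h s hs t ht
  simpa using hker hc

lemma relIndex_constructionA {C D : Submodule (ZMod 2) (ι → ZMod 2)} (h : C ≤ D) :
    (constructionA C).toAddSubgroup.relIndex (constructionA D).toAddSubgroup
      = 2 ^ (finrank (ZMod 2) D - finrank (ZMod 2) C) := by
  rw [constructionA, constructionA, Submodule.map_toAddSubgroup, Submodule.map_toAddSubgroup,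
    AddSubgroup.relIndex_map_map_of_injective _ _ halve_injective]
  change (AddSubgroup.comap modTwo.toAddMonoidHom C.toAddSubgroup).relIndex
    (AddSubgroup.comap modTwo.toAddMonoidHom D.toAddSubgroup) = _
  rw [AddSubgroup.relIndex_comap, AddSubgroup.map_comap_eq_self_of_surjective modTwo_surjective]
  change Nat.card (D ⧸ C.comap D.subtype) = _
  rw [Module.natCard_eq_pow_finrank (K := ZMod 2), Nat.card_zmod, Submodule.finrank_quotient,
    (Submodule.comapSubtypeEquivOfLe h).finrank_eq]

section Single

variable [DecidableEq ι]

lemma map_halve_ker_modTwo :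
    (LinearMap.ker modTwo).map halve = span ℤ (Set.range fun a : ι => Pi.single a (1 : ℚ)) := by
  ext v
  rw [Submodule.mem_span_range_iff_exists_fun]
  constructor
  · rintro ⟨u, hu, rfl⟩
    refine ⟨fun a => u a / 2, funext fun b => ?_⟩
    have h2 : (2 : ℤ) ∣ u b := by
      exact_mod_cast (ZMod.intCast_zmod_eq_zero_iff_dvd _ 2).1 (congrFun hu b)
    simp [Finset.sum_apply, Pi.single_apply, Int.cast_div h2]
  · rintro ⟨t, rfl⟩
    refine ⟨2 • t, ?_, funext fun b => ?_⟩
    · ext a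
      simp [show (2 : ZMod 2) = 0 from rfl]
    · simp [Finset.sum_apply, Pi.single_apply]

lemma span_single_union_halve (T : Set (ι → ℤ)) :
    span ℤ (Set.range (fun a : ι => Pi.single a (1 : ℚ)) ∪ halve '' T)
      = constructionA (span (ZMod 2) (modTwo '' T)) := by
  rw [constructionA, Submodule.restrictScalars_span ℤ (ZMod 2) ZMod.intCast_surjective,
    ← Submodule.map_span, Submodule.comap_map_eq, Submodule.map_sup, Submodule.map_span,
    map_halve_ker_modTwo, Submodule.span_union, sup_comm]

lemma single_mem_constructionA (C : Submodule (ZMod 2) (ι → ZMod 2)) (a : ι) :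
    Pi.single a (1 : ℚ) ∈ constructionA C := by
  have hker : (LinearMap.ker modTwo).map halve ≤ constructionA C :=
    Submodule.map_mono fun u hu => by
      simp only [Submodule.mem_comap, LinearMap.mem_ker.1 hu, zero_mem]
  apply hker
  rw [map_halve_ker_modTwo]
  exact subset_span ⟨a, rfl⟩

lemma span_rat_constructionA (C : Submodule (ZMod 2) (ι → ZMod 2)) :
    span ℚ (constructionA C : Set (ι → ℚ)) = ⊤ := by
  rw [eq_top_iff, ← (Pi.basisFun ℚ ι).span_eq]
  refine span_mono ?_
  rintro _ ⟨a, rfl⟩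
  rw [Pi.basisFun_apply]
  exact single_mem_constructionA C a

end Single

instance (C : Submodule (ZMod 2) (ι → ZMod 2)) : Module.Finite ℤ (constructionA C) :=
  Module.Finite.iff_fg.2 ((IsNoetherian.noetherian _).map halve)

instance (C : Submodule (ZMod 2) (ι → ZMod 2)) : Module.Free ℤ (constructionA C) :=
  Module.free_of_finite_type_torsion_free'

lemma finrank_constructionA (C : Submodule (ZMod 2) (ι → ZMod 2)) :
    finrank ℤ (constructionA C) = Fintype.card ι := by
  rw [constructionA, ← (Submodule.equivMapOfInjective _ halve_injective _).finrank_eq]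
  refine le_antisymm ((Submodule.finrank_le _).trans_eq (finrank_fintype_fun_eq_card ℤ)) ?_
  have hdouble : LinearMap.range (2 • LinearMap.id : (ι → ℤ) →ₗ[ℤ] ι → ℤ)
      ≤ (C.restrictScalars ℤ).comap modTwo := by
    rintro _ ⟨w, rfl⟩
    have hzero : modTwo (2 • w) = 0 := by
      ext a
      simp [show (2 : ZMod 2) = 0 from rfl]
    simp only [LinearMap.smul_apply, LinearMap.id_apply, Submodule.mem_comap, hzero]
    exact zero_mem _
  calc Fintype.card ι = finrank ℤ (LinearMap.range (2 • LinearMap.id : (ι → ℤ) →ₗ[ℤ] ι → ℤ)) := by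
        rw [LinearMap.finrank_range_of_inj, finrank_fintype_fun_eq_card]
        exact fun u v h => funext fun a => by simpa using congrFun h a
    _ ≤ _ := Submodule.finrank_mono hdouble

end ConstructionA

namespace KummerLattice

open ConstructionA

lemma EK_eq_single (a : F16) : EK a = Pi.single a 1 := by
  ext b
  simp [EK, Pi.single_apply]

lemma BK_apply (u v : VK) : BK u v = -2 * (u ⬝ᵥ v) := rfl

lemma BK_comm (u v : VK) : BK u v = BK v u := by
  rw [BK_apply, BK_apply, dotProduct_comm]

lemma BK_self_neg {v : VK} (hv : v ≠ 0) : BK v v < 0 := by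
  have hpos : 0 < v ⬝ᵥ v := by
    obtain ⟨b, hb⟩ := Function.ne_iff.1 hv
    exact Finset.sum_pos' (fun a _ => mul_self_nonneg _) ⟨b, Finset.mem_univ b, mul_self_pos.2 hb⟩
  rw [BK_apply]
  linarith

lemma BK_halve (u w : F16 → ℤ) : BK (halve u) (halve w) = -((u ⬝ᵥ w : ℤ) : ℚ) / 2 := by
  rw [BK_apply, dotProduct, dotProduct, Int.cast_sum, Finset.mul_sum, neg_div, Finset.sum_div,
    ← Finset.sum_neg_distrib]
  refine Finset.sum_congr rfl fun a _ => ?_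
  simp only [halve_apply, Int.cast_mul]
  ring

lemma exists_BK_halve_eq_intCast_iff {u w : F16 → ℤ} :
    (∃ k : ℤ, BK (halve u) (halve w) = k) ↔ modTwo u ⬝ᵥ modTwo w = 0 := by
  rw [← two_dvd_dotProduct_iff, BK_halve]
  constructor
  · rintro ⟨k, hk⟩
    exact ⟨-k, by exact_mod_cast (by linarith : ((u ⬝ᵥ w : ℤ) : ℚ) = 2 * -k)⟩
  · rintro ⟨k, hk⟩
    exact ⟨-k, by rw [hk]; push_cast; ring⟩

lemma BK_single (v : VK) (a : F16) : BK v (Pi.single a 1) = -2 * v a := by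
  simp [BK_apply]

lemma dualLat_constructionA (C : Submodule (ZMod 2) (F16 → ZMod 2)) :
    dualLat BK (constructionA C) = constructionA (dualCode C) := by
  apply le_antisymm
  · rintro v ⟨-, hv⟩
    choose k hk using fun a => hv _ (single_mem_constructionA C a)
    have hvk : v = halve (-k) := funext fun a => by
      have := hk a
      rw [BK_single] at this
      simp only [halve_apply, Pi.neg_apply, Int.cast_neg]
      linarith
    subst hvk
    refine ⟨-k, mem_dualCode.2 fun c hc => ?_, rfl⟩
    obtain ⟨w, rfl⟩ := modTwo_surjective c
    rw [dotProduct_comm, ← exists_BK_halve_eq_intCast_iff]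
    exact hv _ ⟨w, hc, rfl⟩
  · rintro _ ⟨u, hu, rfl⟩
    refine ⟨span_rat_constructionA C ▸ Submodule.mem_top, ?_⟩
    rintro _ ⟨w, hw, rfl⟩
    rw [exists_BK_halve_eq_intCast_iff, dotProduct_comm]
    exact hu _ hw

lemma halfSum_eq_halve (H : Finset F16) : halfSum H = halve ((H : Set F16).indicator 1) := by
  ext b
  simp [halfSum, EK, Finset.sum_apply, Set.indicator_apply, div_eq_inv_mul]

lemma BK_halfSum_self (H : Finset F16) : BK (halfSum H) (halfSum H) = -(H.card : ℚ) / 2 := by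
  rw [halfSum_eq_halve, BK_halve]
  congr
  simp [dotProduct, Set.indicator_apply]

lemma card_F16 : Fintype.card F16 = 16 := rfl

lemma zmod_two_eq_zero_or_eq_one (x : ZMod 2) : x = 0 ∨ x = 1 := by
  revert x
  decide

lemma _root_.IsAffineHyperplane.card_eq {H : Finset F16} (hH : IsAffineHyperplane H) :
    H.card = 8 := by
  obtain ⟨φ, c, hφ, hmem⟩ := hH
  have hsurj : Function.Surjective φ := by
    obtain ⟨a, ha⟩ : ∃ a, φ a ≠ 0 := by
      by_contra! h
      exact hφ (LinearMap.ext h)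
    intro y
    rcases zmod_two_eq_zero_or_eq_one y with rfl | rfl
    · exact ⟨0, map_zero φ⟩
    · exact ⟨a, (zmod_two_eq_zero_or_eq_one (φ a)).resolve_left ha⟩
  have hfiber (y : ZMod 2) :
      (Finset.univ.filter fun a => φ a = y).card = (Finset.univ.filter fun a => φ a = 0).card :=
    AddMonoidHom.card_fiber_eq_of_mem_range φ (hsurj y) (hsurj 0)
  have htotal : Fintype.card F16 = ∑ y : ZMod 2, (Finset.univ.filter fun a => φ a = y).card :=
    Finset.card_eq_sum_card_fiberwise fun _ _ => Finset.mem_univ _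
  have hH : H = Finset.univ.filter fun a => φ a = c := by ext a; simp [hmem]
  simp only [hfiber, Finset.sum_const, Finset.card_univ, ZMod.card, smul_eq_mul] at htotal
  rw [card_F16] at htotal
  rw [hH, hfiber]
  omega

/-- The generators `1, x₀, x₁, x₂, x₃` of the first order Reed–Muller code `RM(1,4)`. -/
def affineGen : Option (Fin 4) → F16 → ZMod 2
  | none => 1
  | some i => fun a => a i

def affineCode : Submodule (ZMod 2) (F16 → ZMod 2) := span (ZMod 2) (Set.range affineGen)

lemma finrank_affineCode : finrank (ZMod 2) affineCode = 5 := by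
  have hli : LinearIndependent (ZMod 2) affineGen := by
    rw [Fintype.linearIndependent_iff]
    decide
  rw [affineCode, finrank_span_eq_card hli]
  rfl

lemma affineCode_le_dualCode : affineCode ≤ dualCode affineCode :=
  span_le_dualCode_span <| by
    rintro _ ⟨i, rfl⟩ _ ⟨j, rfl⟩
    revert i j
    decide

lemma affine_mem_affineCode (k : ZMod 2) (φ : F16 →ₗ[ZMod 2] ZMod 2) :
    (fun a => k + φ a) ∈ affineCode := by
  rw [affineCode, Submodule.mem_span_range_iff_exists_fun]
  refine ⟨fun i => i.elim k fun i => φ fun j => if i = j then 1 else 0, funext fun a => ?_⟩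
  simp [Fintype.sum_option, affineGen, φ.pi_apply_eq_sum_univ a, mul_comm]

lemma modTwo_indicator {H : Finset F16} {φ : F16 →ₗ[ZMod 2] ZMod 2} {c : ZMod 2}
    (hH : ∀ a, a ∈ H ↔ φ a = c) :
    modTwo ((H : Set F16).indicator 1) = fun a => (1 + c) + φ a := by
  have key : ∀ x y : ZMod 2, (if x = y then 1 else 0) = 1 + y + x := by decide
  ext a
  simp [Set.indicator_apply, hH, apply_ite (Int.cast : ℤ → ZMod 2), key]

lemma isAffineHyperplane_coord (i : Fin 4) (c : ZMod 2) :
    IsAffineHyperplane (Finset.univ.filter fun a : F16 => a i = c) :=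
  ⟨LinearMap.proj i, c, fun h => by simpa using LinearMap.congr_fun h (Pi.single i 1),
    by simp⟩

def hyperplaneIndicators : Set (F16 → ℤ) :=
  {u | ∃ H, IsAffineHyperplane H ∧ u = (H : Set F16).indicator 1}

lemma span_modTwo_hyperplaneIndicators :
    span (ZMod 2) (modTwo '' hyperplaneIndicators) = affineCode := by
  apply le_antisymm
  · rw [span_le]
    rintro _ ⟨_, ⟨H, ⟨φ, c, -, hH⟩, rfl⟩, rfl⟩
    rw [modTwo_indicator hH]
    exact affine_mem_affineCode _ φ
  · have hcoord (i : Fin 4) (c : ZMod 2) :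
        (fun a : F16 => 1 + c + a i) ∈ span (ZMod 2) (modTwo '' hyperplaneIndicators) := by
      have h := modTwo_indicator (H := Finset.univ.filter fun a : F16 => a i = c)
        (φ := LinearMap.proj i) (c := c) (by simp)
      simp only [LinearMap.proj_apply] at h
      rw [← h]
      exact subset_span ⟨_, ⟨_, isAffineHyperplane_coord i c, rfl⟩, rfl⟩
    have two : (2 : ZMod 2) = 0 := rfl
    rw [affineCode, span_le]
    rintro _ ⟨_ | i, rfl⟩ <;> rw [SetLike.mem_coe]
    · have h1 : affineGen none = (fun a => 1 + 0 + a 0) + fun a => 1 + 1 + a 0 := by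
        ext a
        simp only [affineGen, Pi.add_apply, Pi.one_apply]
        linear_combination (-1 - a 0) * two
      rw [h1]
      exact add_mem (hcoord 0 0) (hcoord 0 1)
    · have hi : affineGen (some i) = fun a => 1 + 1 + a i := by
        ext a
        simp only [affineGen]
        linear_combination -two
      rw [hi]
      exact hcoord i 1

lemma kummerLat_eq_constructionA : KummerLat = constructionA affineCode := by
  have hgens : Set.range EK ∪ {v | ∃ H, IsAffineHyperplane H ∧ v = halfSum H}
      = Set.range (fun a => Pi.single a 1) ∪ halve '' hyperplaneIndicators := by
    congr 1
    · exact congrArg Set.range (funext EK_eq_single)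
    · ext v
      simp [hyperplaneIndicators, halfSum_eq_halve, eq_comm]
  rw [KummerLat, hgens, span_single_union_halve, span_modTwo_hyperplaneIndicators]

end KummerLattice

open ConstructionA KummerLattice

/-- The Kummer lattice `Π` is an even negative-definite lattice of rank 16 whose
discriminant group has order `2⁶`. -/
theorem kummer_even_negdef_rank16_disc :
    (∀ v ∈ KummerLat, ∃ k : ℤ, BK v v = 2 * k) ∧
    (∀ v ∈ KummerLat, v ≠ 0 → BK v v < 0) ∧
    Nonempty (Module.Basis (Fin 16) ℤ KummerLat) ∧
    Nat.card (Disc BK KummerLat) = 2 ^ 6 := by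
  have hdual : dualLat BK KummerLat = constructionA (dualCode affineCode) := by
    rw [kummerLat_eq_constructionA, dualLat_constructionA]
  have hintegral : KummerLat ≤ dualLat BK KummerLat := by
    rw [hdual, kummerLat_eq_constructionA]
    exact constructionA_mono affineCode_le_dualCode
  refine ⟨fun v hv => exists_eq_two_mul_of_mem_span BK_comm hintegral ?_ hv,
    fun v _ hv => BK_self_neg hv, ⟨?_⟩, ?_⟩
  · rintro _ (⟨a, rfl⟩ | ⟨H, hH, rfl⟩)
    · exact ⟨-1, by simp [EK_eq_single, BK_single]⟩
    · exact ⟨-2, by rw [BK_halfSum_self, hH.card_eq]; norm_num⟩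
  · exact (finBasisOfFinrankEq ℤ (constructionA affineCode) (finrank_constructionA _)).map
      (LinearEquiv.ofEq _ _ kummerLat_eq_constructionA.symm)
  · rw [card_disc_eq_relIndex, hdual, kummerLat_eq_constructionA,
      relIndex_constructionA affineCode_le_dualCode, finrank_dualCode, finrank_affineCode]
    rfl
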